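/- arXiv:2604.27592 — 5 statements merged into one kernel-verified Lean document; each statement's English description precedes it below -/
import Mathlib

section
/- Let F be an algebraically closed field of characteristic 0, k ≥ 2 an integer, and B ∈ GL_n(F). Then the map (X₁, X₂) ↦ X₁^k + B·X₂^k is surjective on M_n(F). -/
/-!
Choose `a ∈ F` outside the spectrum of `C` and `c` with `c ^ k = a`. Then `C - a` is invertible,
so `C = (c • 1) ^ k + B * X ^ k` as soon as `X ^ k = B⁻¹ (C - a)`, and every invertible matrix `M`
over `F` is a `k`-th power. For the latter, a polynomial interpolating `k`-th roots of the
eigenvalues of `M` gives an `x` commuting with `M` such that `x ^ k - M` is nilpotent; since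
`k x ^ (k - 1)` is invertible, Newton's method for `X ^ k - M` in the commutative algebra `F[M]`
corrects `x` to an exact `k`-th root.
-/

open Polynomial

theorem exists_pow_eq_of_isNilpotent_pow_sub {S : Type*} [CommRing S] {k : ℕ}
    (hk : IsUnit (k : S)) {u x : S} (hu : IsUnit u) (hx : IsNilpotent (x ^ k - u)) :
    ∃ y : S, y ^ k = u := by
  rcases subsingleton_or_nontrivial S with hS | hS
  · exact ⟨x, Subsingleton.elim _ _⟩
  have hk0 : k ≠ 0 := by rintro rfl; simp at hk
  have hxk : IsUnit (x ^ k) := by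
    simpa using hx.isUnit_add_left_of_commute hu (Commute.all _ _)
  have hderiv : IsUnit (aeval x (derivative (X ^ k - C u))) := by
    simpa [derivative_X_pow] using hk.mul (((isUnit_pow_iff hk0).mp hxk).pow (k - 1))
  obtain ⟨y, -, hy⟩ := (existsUnique_nilpotent_sub_and_aeval_eq_zero
    (by simpa using hx) hderiv).exists
  exact ⟨y, by simpa [sub_eq_zero] using hy⟩

theorem Polynomial.exists_dvd_pow_sub_X_of_squarefree {F : Type*} [Field F] [IsAlgClosed F]
    {g : F[X]} (hg : Squarefree g) {k : ℕ} (hk : k ≠ 0) : ∃ P : F[X], g ∣ P ^ k - X := by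
  classical
  choose v hv using fun a : F ↦ IsAlgClosed.exists_pow_nat_eq a (Nat.pos_of_ne_zero hk)
  set P := Lagrange.interpolate g.roots.toFinset id v
  refine ⟨P, ?_⟩
  rcases eq_or_ne (P ^ k - X) 0 with hq | hq
  · rw [hq]; exact dvd_zero g
  refine (IsAlgClosed.splits g).dvd_of_roots_le_roots hg.ne_zero ?_
  refine (Multiset.le_iff_subset (nodup_roots (PerfectField.separable_iff_squarefree.mpr hg))).mpr
    fun a ha ↦ (mem_roots hq).mpr ?_
  have hPa : P.eval a = v a :=
    Lagrange.eval_interpolate_at_node v (Set.injOn_id _) (Multiset.mem_toFinset.mpr ha)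
  simp [hPa, hv]

theorem IsIntegral.exists_pow_eq_of_isUnit_of_commRing {F S : Type*} [Field F] [IsAlgClosed F]
    [CommRing S] [Algebra F S] {s : S} (hs : IsIntegral F s) (hu : IsUnit s)
    {k : ℕ} (hk : (k : F) ≠ 0) : ∃ t : S, t ^ k = s := by
  obtain ⟨g, N, hg, -, hmg⟩ := exists_squarefree_dvd_pow_of_ne_zero (minpoly.ne_zero hs)
  obtain ⟨P, hP⟩ := exists_dvd_pow_sub_X_of_squarefree hg (k := k) (by rintro rfl; simp at hk)
  have hkS : IsUnit (k : S) := by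
    simpa using (IsUnit.mk0 (k : F) hk).map (algebraMap F S)
  refine exists_pow_eq_of_isNilpotent_pow_sub hkS hu (x := aeval s P) ⟨N, ?_⟩
  have : aeval s ((P ^ k - X) ^ N) = 0 :=
    minpoly.dvd_iff.mp (hmg.trans (pow_dvd_pow_of_dvd hP N))
  simpa using this

theorem IsIntegral.exists_pow_eq_of_isUnit {F A : Type*} [Field F] [IsAlgClosed F]
    [Ring A] [Algebra F A] {a : A} (ha : IsIntegral F a) (hu : IsUnit a)
    {k : ℕ} (hk : (k : F) ≠ 0) : ∃ b : A, b ^ k = a := by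
  let a' : Algebra.adjoin F {a} := ⟨a, Algebra.self_mem_adjoin_singleton F a⟩
  have : Module.Finite F (Algebra.adjoin F {a}) := Algebra.finite_adjoin_simple_of_isIntegral ha
  have ha' : IsIntegral F a' := Algebra.IsIntegral.isIntegral a'
  have hu' : IsUnit a' := IsArtinianRing.isUnit_of_isIntegral_of_nonZeroDivisor ha'
    (comap_nonZeroDivisors_le_of_injective (f := (Algebra.adjoin F {a}).val) Subtype.val_injective
      hu.mem_nonZeroDivisors)
  obtain ⟨t, ht⟩ := ha'.exists_pow_eq_of_isUnit_of_commRing hu' hk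
  exact ⟨t, congrArg Subtype.val ht⟩

/-- For `B` invertible and `k ≥ 2`, the map `(X₁, X₂) ↦ X₁^k + B * X₂^k` is
surjective on `M_n(F)`. -/
theorem stmt_2 {F : Type*} [Field F] [IsAlgClosed F] [CharZero F] {n : ℕ}
    (B : Matrix (Fin n) (Fin n) F) (hB : IsUnit B) (k : ℕ) (hk : 2 ≤ k) :
    ∀ C : Matrix (Fin n) (Fin n) F,
      ∃ X₁ X₂ : Matrix (Fin n) (Fin n) F, C = X₁ ^ k + B * X₂ ^ k := by
  intro C
  obtain ⟨B, rfl⟩ := hB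
  have hk0 : k ≠ 0 := by omega
  obtain ⟨a, ha⟩ := (Matrix.finite_spectrum C).infinite_compl.nonempty
  have hCa : IsUnit (C - algebraMap F _ a) := by
    simpa using (spectrum.notMem_iff.mp ha).neg
  obtain ⟨c, hc⟩ := IsAlgClosed.exists_pow_nat_eq a (Nat.pos_of_ne_zero hk0)
  obtain ⟨X₂, hX₂⟩ := (Algebra.IsIntegral.isIntegral (R := F)
    ((B⁻¹ : (Matrix (Fin n) (Fin n) F)ˣ) * (C - algebraMap F _ a))).exists_pow_eq_of_isUnit
      ((B⁻¹).isUnit.mul hCa) (Nat.cast_ne_zero.mpr hk0)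
  refine ⟨algebraMap F _ c, X₂, ?_⟩
  rw [hX₂, ← map_pow, hc, Units.mul_inv_cancel_left, add_sub_cancel]
end

section
/- Let F be a field and C ∈ M_n(F) a matrix with exactly m < n linearly independent rows indexed by i_1 < i_2 < ... < i_m = n, all other rows being zero. Then there exist vectors t_j ∈ F^n for j ∈ {1,...,n} \ {i_1,...,i_m} such that the set {c_{i_1},...,c_{i_m}} ∪ {t_j} is linearly independent in F^n, and the submatrix T_I = (t_{i,j+1})_{i,j∈I} with I = {1,...,n} \ {i_1,...,i_m} has nonzero determinant. -/
open Module Submodule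

theorem aux_exists_notMem {F M : Type*} [Field F] [AddCommGroup M] [Module F M]
    {V K : Submodule F M} (hV : V ≠ ⊤) (hK : K ≠ ⊤) :
    ∃ w : M, w ∉ V ∧ w ∉ K := by
  simp only [Ne, Submodule.eq_top_iff'] at hV hK
  push_neg at hV hK
  obtain ⟨v, hv⟩ := hV
  obtain ⟨k, hk⟩ := hK
  by_cases hvK : v ∈ K
  · by_cases hkV : k ∈ V
    · refine ⟨v + k, fun h => hv ?_, fun h => hk ?_⟩
      · have := V.sub_mem h hkV; simpa using this
      · have := K.sub_mem h hvK; simpa using this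
    · exact ⟨k, hkV, hk⟩
  · exact ⟨v, hv, hvK⟩

theorem aux_isCompl_of_sup {F M : Type*} [Field F] [AddCommGroup M] [Module F M]
    [FiniteDimensional F M] {U W : Submodule F M} (hsup : U ⊔ W = ⊤)
    (hrank : finrank F U + finrank F W ≤ finrank F M) :
    IsCompl U W := by
  have h1 := Submodule.finrank_sup_add_finrank_inf_eq U W
  rw [hsup, finrank_top] at h1
  have h0 : finrank F ↥(U ⊓ W) = 0 := by omega
  have hbot : U ⊓ W = ⊥ := Submodule.finrank_eq_zero.mp h0
  exact ⟨disjoint_iff.2 hbot, codisjoint_iff.2 hsup⟩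

theorem aux_common_compl {F M : Type*} [Field F] [AddCommGroup M] [Module F M]
    [FiniteDimensional F M] (V K : Submodule F M)
    (h : finrank F V = finrank F K) :
    ∃ W : Submodule F M, IsCompl V W ∧ IsCompl K W := by
  suffices H : ∀ d (V K : Submodule F M), finrank F V = finrank F K →
      finrank F M - finrank F V = d → ∃ W : Submodule F M, IsCompl V W ∧ IsCompl K W from
    H _ V K h rfl
  intro d
  induction d using Nat.strong_induction_on with
  | _ d ih =>
  intro V K h hd
  rcases Nat.eq_zero_or_pos d with rfl | hpos
  · have hV : V = ⊤ := Submodule.eq_top_of_finrank_eq (by have := V.finrank_le; omega)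
    have hK : K = ⊤ := Submodule.eq_top_of_finrank_eq (by have := K.finrank_le; omega)
    exact ⟨⊥, by simp [hV, hK, isCompl_top_bot]⟩
  · have hVlt : finrank F V < finrank F M := by have := V.finrank_le; omega
    have hVne : V ≠ ⊤ := by
      intro hEq; rw [hEq, finrank_top] at hVlt; omega
    have hKne : K ≠ ⊤ := by
      intro hEq; rw [hEq, finrank_top] at h; omega
    obtain ⟨w, hwV, hwK⟩ := aux_exists_notMem hVne hKne
    have hw0 : w ≠ 0 := fun h0 => hwV (h0 ▸ V.zero_mem)
    have hspan : finrank F (F ∙ w) = 1 := finrank_span_singleton hw0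
    have hfr : ∀ (U : Submodule F M), w ∉ U → finrank F ↥(U ⊔ F ∙ w) = finrank F U + 1 := by
      intro U hwU
      have hinf : U ⊓ (F ∙ w) = ⊥ := by
        rw [eq_bot_iff]
        rintro x ⟨hxU, hxw⟩
        obtain ⟨c, rfl⟩ := Submodule.mem_span_singleton.mp hxw
        rcases eq_or_ne c 0 with rfl | hc
        · simp
        · exact absurd (by simpa [smul_smul, inv_mul_cancel₀ hc] using U.smul_mem c⁻¹ hxU) hwU
      have := Submodule.finrank_sup_add_finrank_inf_eq U (F ∙ w)
      rw [hinf, finrank_bot, hspan] at this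
      omega
    have hV' := hfr V hwV
    have hK' := hfr K hwK
    obtain ⟨W', hW'V, hW'K⟩ := ih (d - 1) (by omega) (V ⊔ F ∙ w) (K ⊔ F ∙ w)
      (by rw [hV', hK', h]) (by omega)
    refine ⟨(F ∙ w) ⊔ W', ?_, ?_⟩
    · refine aux_isCompl_of_sup ?_ ?_
      · rw [← sup_assoc]; exact hW'V.codisjoint.eq_top
      · have h1 := Submodule.finrank_add_eq_of_isCompl hW'V
        have h2 := Submodule.finrank_sup_add_finrank_inf_eq (F ∙ w) W'
        omega
    · refine aux_isCompl_of_sup ?_ ?_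
      · rw [← sup_assoc]; exact hW'K.codisjoint.eq_top
      · have h1 := Submodule.finrank_add_eq_of_isCompl hW'K
        have h2 := Submodule.finrank_sup_add_finrank_inf_eq (F ∙ w) W'
        omega


/-- If `C` has exactly `m < n` linearly independent rows, indexed by a set `s`
containing the last index, and all other rows zero, then one can choose vectors
`t_j` for `j ∉ s` completing the nonzero rows of `C` to a linearly independent
family, such that the submatrix `(t_{i,j+1})_{i,j ∉ s}` has nonzero determinant. -/
theorem stmt_5 {F : Type*} [Field F] {n : ℕ}
    (C : Matrix (Fin (n + 1)) (Fin (n + 1)) F)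
    (s : Finset (Fin (n + 1))) (hcard : s.card < n + 1)
    (hlast : Fin.last n ∈ s)
    (hli : LinearIndependent F (fun i : {x // x ∈ s} => C (i : Fin (n + 1))))
    (hzero : ∀ i : Fin (n + 1), i ∉ s → C i = 0) :
    ∃ t : Fin (n + 1) → Fin (n + 1) → F,
      LinearIndependent F
        (fun x : {y // y ∈ s} ⊕ {y // y ∈ sᶜ} =>
          Sum.elim (fun i : {y // y ∈ s} => C (i : Fin (n + 1)))
            (fun j : {y // y ∈ sᶜ} => t (j : Fin (n + 1))) x) ∧
      (Matrix.of (fun i j : {y // y ∈ sᶜ} =>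
        t (i : Fin (n + 1)) ((j : Fin (n + 1)) + 1))).det ≠ 0 := by
  classical
  set g : {y // y ∈ sᶜ} → Fin (n + 1) := fun j => (j : Fin (n + 1)) + 1 with hg
  have hginj : Function.Injective g := by
    intro a b hab
    simp only [hg] at hab
    exact Subtype.ext (add_left_injective 1 hab)
  set π : (Fin (n + 1) → F) →ₗ[F] ({y // y ∈ sᶜ} → F) := LinearMap.funLeft F F g with hπ
  have hπsurj : Function.Surjective π := LinearMap.funLeft_surjective_of_injective F F g hginj
  set V : Submodule F (Fin (n + 1) → F) :=
    Submodule.span F (Set.range (fun i : {x // x ∈ s} => C (i : Fin (n + 1)))) with hV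
  have hcards : Fintype.card {x // x ∈ s} = s.card := Fintype.card_coe s
  have hcardsc : Fintype.card {y // y ∈ sᶜ} = n + 1 - s.card := by
    rw [Fintype.card_coe, Finset.card_compl, Fintype.card_fin]
  have hfV : finrank F V = s.card := by
    rw [hV, finrank_span_eq_card hli, hcards]
  have hfM : finrank F (Fin (n + 1) → F) = n + 1 := by simp
  have hfK : finrank F (LinearMap.ker π) = s.card := by
    have h1 := LinearMap.finrank_range_add_finrank_ker π
    have h2 : finrank F (LinearMap.range π) = n + 1 - s.card := by
      rw [LinearMap.range_eq_top.2 hπsurj, finrank_top]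
      simp [hcardsc]
    omega
  obtain ⟨W, hWV, hWK⟩ := aux_common_compl V (LinearMap.ker π) (by rw [hfV, hfK])
  have hfW : finrank F W = n + 1 - s.card := by
    have := Submodule.finrank_add_eq_of_isCompl hWV
    omega
  have hce : finrank F ↥W = Fintype.card {y // y ∈ sᶜ} := by rw [hfW, hcardsc]
  let b : Basis {y // y ∈ sᶜ} F W :=
    (Module.finBasis F W).reindex ((Fintype.equivFinOfCardEq hce.symm).symm)
  refine ⟨fun j => if h : j ∈ sᶜ then ((b ⟨j, h⟩ : W) : Fin (n + 1) → F) else 0, ?_, ?_⟩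
  · have ht : (fun j : {y // y ∈ sᶜ} =>
        (if h : (j : Fin (n+1)) ∈ sᶜ then ((b ⟨(j : Fin (n+1)), h⟩ : W) : Fin (n + 1) → F) else 0))
        = fun j : {y // y ∈ sᶜ} => ((b j : W) : Fin (n + 1) → F) := by
      funext j
      rw [dif_pos j.2]
    have hbind : LinearIndependent F (fun j : {y // y ∈ sᶜ} => ((b j : W) : Fin (n + 1) → F)) :=
      b.linearIndependent.map' W.subtype W.ker_subtype
    have hdisj : Disjoint (Submodule.span F (Set.range (fun i : {x // x ∈ s} => C (i : Fin (n + 1)))))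
        (Submodule.span F (Set.range (fun j : {y // y ∈ sᶜ} => ((b j : W) : Fin (n + 1) → F)))) := by
      refine hWV.disjoint.mono_right ?_
      rw [Submodule.span_le]
      rintro _ ⟨j, rfl⟩
      exact (b j).2
    have := hli.sum_type hbind hdisj
    simpa [ht] using this
  · intro hdet
    obtain ⟨v, hv0, hv⟩ := Matrix.exists_vecMul_eq_zero_iff.mpr hdet
    have hrows : LinearIndependent F (fun i : {y // y ∈ sᶜ} => π ((b i : W) : Fin (n + 1) → F)) := by
      refine (b.linearIndependent.map' W.subtype W.ker_subtype).map ?_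
      refine hWK.disjoint.symm.mono_left ?_
      rw [Submodule.span_le]
      rintro _ ⟨j, rfl⟩
      exact (b j).2
    rw [Fintype.linearIndependent_iff] at hrows
    refine hv0 (funext fun i => hrows v ?_ i)
    funext j
    have := congrFun hv j
    simp only [Matrix.vecMul, dotProduct, Matrix.of_apply, Pi.zero_apply] at this
    simp only [Finset.sum_apply, Pi.smul_apply, smul_eq_mul, Pi.zero_apply]
    rw [← this]
    refine Finset.sum_congr rfl fun i _ => ?_
    rw [dif_pos i.2]
    rfl
end

section
/- Let F be an algebraically closed field of characteristic 0 and k ≥ 2 an integer. Let J_{0,n} be the n×n nilpotent Jordan block. Then for every C ∈ M_n(F) there exist X₁, X₂ ∈ M_n(F) with C = X₁^k + J_{0,n}·X₂^k. -/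
/-- The nilpotent Jordan block of size `m`. -/
def jordanBlockZero (F : Type*) [Zero F] [One F] (m : ℕ) :
    Matrix (Fin m) (Fin m) F :=
  Matrix.of fun i j => if (i : ℕ) + 1 = (j : ℕ) then 1 else 0

/-!
For `n = m + 1` and a scalar `t`, write `C = A + J Y`, where `A` is `t • 1` with its last row
replaced by the last row of `C`, and `Y` has rows `e_last, (C - t)₀, …, (C - t)ₘ₋₁`. As `A - t`
has rank one, `A` is annihilated by `(X - t)(X - c)` with `c = C_{last,last}`, while `det Y` is
the characteristic polynomial of the leading `m × m` block of `C` evaluated at `t`. For `t ≠ c`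
outside the spectrum of that block, `A` is annihilated by a squarefree split polynomial and `Y`
is invertible. Both then have `k`-th roots that are polynomials in them: interpolate `k`-th roots
of the eigenvalues, and in the invertible case Hensel-lift `p ^ k ≡ X` to higher powers of the
radical of the characteristic polynomial, which needs `k ≠ 0` in `F`.
-/

open Polynomial Matrix

section Hensel

variable {R : Type*} [CommRing R] {r p f : R} {k : ℕ}

theorem IsCoprime.exists_dvd_and_pow_succ_dvd_add_pow_sub {M : ℕ}
    (hcop : IsCoprime r (k * p ^ (k - 1))) (h : r ^ (M + 1) ∣ p ^ k - f) :
    ∃ q, r ∣ q ∧ r ^ (M + 2) ∣ (p + q) ^ k - f := by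
  obtain ⟨g, hg⟩ := h
  obtain ⟨u, v, huv⟩ := hcop
  -- Newton step: `v` inverts the derivative `k p ^ (k - 1)` modulo `r`.
  obtain ⟨w, hw⟩ := sq_dvd_add_pow_sub_sub (-(v * g * r ^ (M + 1))) p k
  refine ⟨-(v * g * r ^ (M + 1)), ⟨-(v * g * r ^ M), by ring⟩,
    u * g + r ^ M * v ^ 2 * g ^ 2 * w, ?_⟩
  linear_combination hw + hg - (r ^ (M + 1) * g) * huv

theorem IsCoprime.exists_pow_dvd_pow_sub (hk : IsUnit (k : R)) (hp : IsCoprime r p)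
    (h : r ∣ p ^ k - f) (M : ℕ) : ∃ p', IsCoprime r p' ∧ r ^ (M + 1) ∣ p' ^ k - f := by
  induction M with
  | zero => exact ⟨p, hp, by rwa [pow_one]⟩
  | succ M ih =>
    obtain ⟨p', hp', hdvd⟩ := ih
    have hcop : IsCoprime r (k * p' ^ (k - 1)) :=
      (isCoprime_mul_unit_left_right hk _ _).mpr hp'.pow_right
    obtain ⟨q, ⟨z, rfl⟩, hq⟩ := hcop.exists_dvd_and_pow_succ_dvd_add_pow_sub hdvd
    exact ⟨_, hp'.add_mul_left_right z, hq⟩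

end Hensel

namespace Polynomial

variable {F : Type*} [Field F]

theorem prod_X_sub_C_dvd_of_forall_isRoot {s : Finset F} {g : F[X]}
    (h : ∀ l ∈ s, g.IsRoot l) : ∏ l ∈ s, (X - C l) ∣ g :=
  Finset.prod_dvd_of_coprime ((pairwise_coprime_X_sub_C Function.injective_id).set_pairwise _)
    fun l hl => dvd_iff_isRoot.mpr (h l hl)

theorem exists_prod_X_sub_C_dvd_pow_sub_X [IsAlgClosed F] {k : ℕ} (hk : 0 < k) (s : Finset F) :
    ∃ p : F[X], (∀ l ∈ s, p.eval l ^ k = l) ∧ ∏ l ∈ s, (X - C l) ∣ p ^ k - X := by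
  classical
  choose μ hμ using fun l : F => IsAlgClosed.exists_pow_nat_eq l hk
  have hnode : ∀ l ∈ s, (Lagrange.interpolate s id μ).eval l ^ k = l := fun l hl => by
    simpa [hμ] using congrArg (· ^ k) (Lagrange.eval_interpolate_at_node μ (Set.injOn_id _) hl)
  exact ⟨_, hnode, prod_X_sub_C_dvd_of_forall_isRoot fun l hl => by
    rw [IsRoot.def, eval_sub, eval_pow, eval_X, hnode l hl, sub_self]⟩

theorem dvd_prod_roots_X_sub_C_pow [IsAlgClosed F] [DecidableEq F] {q : F[X]} (hq : q ≠ 0) :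
    q ∣ (∏ l ∈ q.roots.toFinset, (X - C l)) ^ (q.natDegree + 1) := by
  have hr : ∏ l ∈ q.roots.toFinset, (X - C l) ≠ 0 :=
    (monic_prod_of_monic _ _ fun l _ => monic_X_sub_C l).ne_zero
  rw [IsAlgClosed.dvd_iff_roots_le_roots hq (pow_ne_zero _ hr), roots_pow, roots_prod_X_sub_C,
    Multiset.le_iff_count]
  intro l
  rw [Multiset.count_nsmul, Multiset.toFinset_val, Multiset.count_dedup]
  split_ifs with hl
  · exact (Multiset.count_le_card _ _).trans ((card_roots' q).trans (by omega))
  · simp [Multiset.count_eq_zero.mpr hl]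

theorem exists_dvd_pow_sub_X [IsAlgClosed F] {k : ℕ} (hk : (k : F) ≠ 0) {q : F[X]}
    (hq : q.eval 0 ≠ 0) : ∃ p : F[X], q ∣ p ^ k - X := by
  classical
  have hq0 : q ≠ 0 := by rintro rfl; simp at hq
  have hk0 : 0 < k := Nat.pos_of_ne_zero fun h => hk (by simp [h])
  obtain ⟨p, hp, hdvd⟩ := exists_prod_X_sub_C_dvd_pow_sub_X hk0 q.roots.toFinset
  have hcop : IsCoprime (∏ l ∈ q.roots.toFinset, (X - C l)) p := by
    refine IsCoprime.prod_left fun l hl => (irreducible_X_sub_C l).coprime_iff_not_dvd.mpr ?_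
    rw [dvd_iff_isRoot, IsRoot.def, ← pow_eq_zero_iff hk0.ne', hp l hl]
    rintro rfl
    exact hq ((mem_roots hq0).mp (Multiset.mem_toFinset.mp hl))
  have hkunit : IsUnit (k : F[X]) := by
    rw [← map_natCast C k]
    exact isUnit_C.mpr hk.isUnit
  obtain ⟨p', -, hp'⟩ := hcop.exists_pow_dvd_pow_sub hkunit hdvd q.natDegree
  exact ⟨p', (dvd_prod_roots_X_sub_C_pow hq0).trans hp'⟩

theorem aeval_pow_eq_of_dvd_pow_sub_X {R A : Type*} [CommRing R] [Ring A] [Algebra R A] {a : A}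
    {p q : R[X]} {k : ℕ} (ha : aeval a q = 0) (h : q ∣ p ^ k - X) : aeval a p ^ k = a := by
  obtain ⟨w, hw⟩ := h
  have := congrArg (aeval a) hw
  rwa [map_sub, map_pow, aeval_X, map_mul, ha, zero_mul, sub_eq_zero] at this

end Polynomial

section Roots

variable {F A : Type*} [Field F] [IsAlgClosed F] [Ring A] [Algebra F A] {k : ℕ}

theorem exists_pow_eq_of_aeval_prod_X_sub_C_eq_zero (hk : 0 < k) {s : Finset F} {a : A}
    (ha : aeval a (∏ l ∈ s, (X - C l)) = 0) : ∃ b : A, b ^ k = a :=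
  let ⟨p, _, hp⟩ := exists_prod_X_sub_C_dvd_pow_sub_X hk s
  ⟨aeval a p, aeval_pow_eq_of_dvd_pow_sub_X ha hp⟩

theorem exists_pow_eq_of_aeval_eq_zero (hk : (k : F) ≠ 0) {q : F[X]} (hq : q.eval 0 ≠ 0) {a : A}
    (ha : aeval a q = 0) : ∃ b : A, b ^ k = a :=
  let ⟨p, hp⟩ := exists_dvd_pow_sub_X hk hq
  ⟨aeval a p, aeval_pow_eq_of_dvd_pow_sub_X ha hp⟩

theorem Matrix.exists_pow_eq_of_det_ne_zero {n : Type*} [Fintype n] [DecidableEq n]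
    (hk : (k : F) ≠ 0) {M : Matrix n n F} (hM : M.det ≠ 0) : ∃ B, B ^ k = M := by
  refine exists_pow_eq_of_aeval_eq_zero hk ?_ M.aeval_self_charpoly
  rw [det_eq_sign_charpoly_coeff] at hM
  rw [← coeff_zero_eq_eval_zero]
  exact right_ne_zero_of_mul hM

end Roots

namespace Matrix

variable {R : Type*} [CommRing R] {n : Type*} [DecidableEq n]

theorem updateRow_smul_one_sub_smul_one (t : R) (i : n) (r : n → R) :
    updateRow (t • 1 : Matrix n n R) i r - t • 1 =
      vecMulVec (Pi.single i 1) (r - t • Pi.single i 1) := by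
  ext a b
  by_cases ha : a = i
  · subst ha; simp [vecMulVec_apply, one_apply, Pi.single_apply, eq_comm]
  · simp [vecMulVec_apply, ha]

theorem aeval_updateRow_smul_one_eq_zero [Fintype n] (t : R) (i : n) (r : n → R) :
    aeval (updateRow (t • 1 : Matrix n n R) i r) ((X - C t) * (X - C (r i))) = 0 := by
  set N := updateRow (t • 1 : Matrix n n R) i r - t • 1 with hN
  have hsq : N * N = (r i - t) • N := by
    rw [hN, updateRow_smul_one_sub_smul_one, vecMulVec_mul_vecMulVec, vecMulVec_smul]
    simp
  have hshift : updateRow (t • 1 : Matrix n n R) i r - r i • 1 = N - (r i - t) • 1 := by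
    rw [hN, sub_smul]; abel
  rw [map_mul, map_sub, map_sub, aeval_X, aeval_C, aeval_C, Algebra.algebraMap_eq_smul_one,
    Algebra.algebraMap_eq_smul_one, ← hN, hshift, mul_sub, hsq, mul_smul_comm, mul_one, sub_self]

end Matrix

section JordanBlock

variable {R : Type*} {m : ℕ}

theorem jordanBlockZero_castSucc [Zero R] [One R] (i : Fin m) :
    jordanBlockZero R (m + 1) i.castSucc = Pi.single i.succ 1 := by
  ext j
  simp [jordanBlockZero, Pi.single_apply, Fin.ext_iff, eq_comm]

theorem jordanBlockZero_last [Zero R] [One R] : jordanBlockZero R (m + 1) (Fin.last m) = 0 := by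
  ext j
  simp [jordanBlockZero, j.is_lt.ne']

theorem jordanBlockZero_mul_castSucc [NonAssocSemiring R]
    (Y : Matrix (Fin (m + 1)) (Fin (m + 1)) R) (i : Fin m) :
    (jordanBlockZero R (m + 1) * Y) i.castSucc = Y i.succ := by
  rw [mul_apply_eq_vecMul, jordanBlockZero_castSucc, single_one_vecMul, row]

theorem jordanBlockZero_mul_last [NonAssocSemiring R] (Y : Matrix (Fin (m + 1)) (Fin (m + 1)) R) :
    (jordanBlockZero R (m + 1) * Y) (Fin.last m) = 0 := by
  rw [mul_apply_eq_vecMul, jordanBlockZero_last, zero_vecMul]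

theorem exists_eq_updateRow_add_jordanBlockZero_mul [CommRing R]
    (C : Matrix (Fin (m + 1)) (Fin (m + 1)) R) (t : R) :
    ∃ Y : Matrix (Fin (m + 1)) (Fin (m + 1)) R,
      Y.det = (C.submatrix Fin.castSucc Fin.castSucc).charpoly.eval t ∧
      C = updateRow (t • 1) (Fin.last m) (C (Fin.last m)) + jordanBlockZero R (m + 1) * Y := by
  set Y : Matrix (Fin (m + 1)) (Fin (m + 1)) R :=
    of (Fin.cons (Pi.single (Fin.last m) 1) fun i => (C - t • 1) i.castSucc)
  refine ⟨Y, ?_, ?_⟩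
  · have hsub : Y.submatrix Fin.succ Fin.castSucc =
        -(scalar (Fin m) t - C.submatrix Fin.castSucc Fin.castSucc) := by
      ext i j
      simp [Y, one_apply, diagonal_apply, Fin.castSucc_inj]
    rw [det_succ_row_zero, Finset.sum_eq_single (Fin.last m)]
    · rw [Fin.succAbove_last, hsub, det_neg, eval_charpoly, ← mul_assoc, Fintype.card_fin]
      simp [Y, ← pow_add, ← two_mul, pow_mul]
    · intro j _ hj
      simp [Y, hj]
    · simp
  · ext i : 1
    induction i using Fin.lastCases with
    | last => simp [jordanBlockZero_mul_last]
    | cast i => simp [jordanBlockZero_mul_castSucc, Y, (Fin.castSucc_lt_last i).ne]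

end JordanBlock

/-- For every `C ∈ M_n(F)` and `k ≥ 2`, the equation `C = X₁^k + J_{0,n} X₂^k`
admits a solution. -/
theorem stmt_6 {F : Type*} [Field F] [IsAlgClosed F] [CharZero F] {n : ℕ}
    (k : ℕ) (hk : 2 ≤ k) (C : Matrix (Fin n) (Fin n) F) :
    ∃ X₁ X₂ : Matrix (Fin n) (Fin n) F,
      C = X₁ ^ k + jordanBlockZero F n * X₂ ^ k := by
  classical
  obtain _ | m := n
  · exact ⟨0, 0, Subsingleton.elim _ _⟩
  set c := C (Fin.last m) (Fin.last m)
  set D := C.submatrix Fin.castSucc Fin.castSucc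
  obtain ⟨t, ht⟩ := Infinite.exists_notMem_finset (insert c D.charpoly.roots.toFinset)
  rw [Finset.mem_insert, not_or, Multiset.mem_toFinset, mem_roots D.charpoly_monic.ne_zero,
    IsRoot.def] at ht
  obtain ⟨Y, hY, hC⟩ := exists_eq_updateRow_add_jordanBlockZero_mul C t
  have hA : aeval (updateRow (t • 1) (Fin.last m) (C (Fin.last m)))
      (∏ l ∈ {t, c}, (X - Polynomial.C l)) = 0 := by
    rw [Finset.prod_pair ht.1]
    exact aeval_updateRow_smul_one_eq_zero _ _ _
  obtain ⟨X₁, hX₁⟩ := exists_pow_eq_of_aeval_prod_X_sub_C_eq_zero (by omega : 0 < k) hA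
  obtain ⟨X₂, hX₂⟩ := Matrix.exists_pow_eq_of_det_ne_zero (k := k)
    (Nat.cast_ne_zero.mpr (by omega)) (hY ▸ ht.2 : Y.det ≠ 0)
  exact ⟨X₁, X₂, by rwa [hX₁, hX₂]⟩
end

section
/- Let F be an algebraically closed field of characteristic 0, k ≥ 2, and J ∈ M_n(F) with r₀ := dim ker(J) ≥ 2. If n ≤ k(r₀ − 1), then the map (X₁, X₂) ↦ X₁^k + J·X₂^k is not surjective on M_n(F). Specifically, there is a matrix C whose lower-right block is a nilpotent Jordan block of size r₀ that is not in the image. -/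
/-!
Row vectors `e` with `e J = 0` form a space of dimension `r₀`; take a basis `e₀, …, e_{r₀-1}`
of it and let `C` act on the right as the shift `eᵢ ↦ eᵢ₊₁`, `e_{r₀-1} ↦ 0`. If
`C = X₁^k + J X₂^k`, then `eᵢ C = eᵢ X₁^k`, so `e₀ X₁^{kj} = e_j` for all `j`: the vector `e₀`
is killed by a power of `X₁` but not by `X₁^{k(r₀-1)}`. Since the kernels of the powers of an
endomorphism of an `n`-dimensional space stabilise by the `n`-th power, `k(r₀-1) < n`.
-/

open Matrix Module

namespace Module.End

variable {K V : Type*} [DivisionRing K] [AddCommGroup V] [Module K V] [FiniteDimensional K V]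

theorem pow_apply_eq_zero_of_finrank_le (f : End K V) {x : V} {N m : ℕ}
    (hN : (f ^ N) x = 0) (hm : finrank K V ≤ m) : (f ^ m) x = 0 := by
  have hx : x ∈ LinearMap.ker (f ^ finrank K V) := ker_pow_le_ker_pow_finrank f N hN
  rwa [← ker_pow_eq_ker_pow_finrank_of_le hm] at hx

theorem mul_lt_finrank_of_pow_apply_eq_succ (f : End K V) (k : ℕ) {w : ℕ → V}
    (hw : ∀ i, (f ^ k) (w i) = w (i + 1)) {r j : ℕ} (hr : w r = 0) (hj : w j ≠ 0) :
    k * j < finrank K V := by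
  have orbit : ∀ i, (f ^ (k * i)) (w 0) = w i := by
    intro i
    induction i with
    | zero => simp
    | succ i ih => rw [pow_mul, pow_succ', mul_apply, ← pow_mul, ih, hw]
  by_contra! h
  exact hj (orbit j ▸ f.pow_apply_eq_zero_of_finrank_le ((orbit r).trans hr) h)

end Module.End

theorem LinearIndependent.exists_linearMap_apply_eq {K V V' ι : Type*} [Field K]
    [AddCommGroup V] [Module K V] [AddCommGroup V'] [Module K V'] {w : ι → V}
    (hw : LinearIndependent K w) (v : ι → V') : ∃ φ : V →ₗ[K] V', ∀ i, φ (w i) = v i := by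
  obtain ⟨φ, hφ⟩ := LinearMap.exists_extend ((Basis.span hw).constr K v)
  refine ⟨φ, fun i => ?_⟩
  have := LinearMap.congr_fun hφ (Basis.span hw i)
  rwa [Basis.constr_basis, LinearMap.comp_apply, Submodule.subtype_apply, Basis.span_apply]
    at this

namespace Matrix

variable {K : Type*} [Field K] {m n : Type*} [Fintype m] [Fintype n]

theorem vecMulLinear_pow_apply {R : Type*} [CommSemiring R] [DecidableEq n]
    (M : Matrix n n R) (k : ℕ) (x : n → R) : (M.vecMulLinear ^ k) x = x ᵥ* M ^ k := by
  induction k generalizing x with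
  | zero => simp
  | succ k ih => rw [pow_succ, Module.End.mul_apply, ih, vecMulLinear_apply, vecMul_vecMul,
      pow_succ']

theorem finrank_ker_vecMulLinear (A : Matrix n n K) :
    finrank K (LinearMap.ker A.vecMulLinear) = finrank K (LinearMap.ker A.mulVecLin) := by
  have hrank := A.rank_transpose
  have h₁ := LinearMap.finrank_range_add_finrank_ker Aᵀ.mulVecLin
  have h₂ := LinearMap.finrank_range_add_finrank_ker A.mulVecLin
  rw [mulVecLin_transpose] at h₁
  rw [rank, rank, mulVecLin_transpose] at hrank
  omega

theorem exists_linearIndependent_vecMul_eq_zero (A : Matrix n n K) {r : ℕ}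
    (hr : finrank K (LinearMap.ker A.mulVecLin) = r) :
    ∃ e : Fin r → n → K, LinearIndependent K e ∧ ∀ i, e i ᵥ* A = 0 := by
  let b := finBasisOfFinrankEq K _ (A.finrank_ker_vecMulLinear.trans hr)
  exact ⟨_, b.linearIndependent.map' _ (Submodule.ker_subtype _), fun i => (b i).2⟩

omit [Fintype n] in
theorem exists_vecMul_eq_of_linearIndependent [DecidableEq m] {ι : Type*} {w : ι → m → K}
    (hw : LinearIndependent K w) (v : ι → n → K) : ∃ C : Matrix m n K, ∀ i, w i ᵥ* C = v i := by
  obtain ⟨φ, hφ⟩ := hw.exists_linearMap_apply_eq v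
  exact ⟨(LinearMap.toMatrix' φ)ᵀ, fun i => by
    rw [vecMul_transpose, ← toLin'_apply, toLin'_toMatrix', hφ]⟩

end Matrix

theorem stmt_12_general {F : Type*} [Field F] {n : ℕ}
    (J : Matrix (Fin n) (Fin n) F) (k : ℕ)
    (r₀ : ℕ) (hr₀ : r₀ = Module.finrank F (LinearMap.ker J.mulVecLin))
    (hr₀2 : 2 ≤ r₀) (hn : n ≤ k * (r₀ - 1)) :
    ∃ C : Matrix (Fin n) (Fin n) F,
      ∀ X₁ X₂ : Matrix (Fin n) (Fin n) F, C ≠ X₁ ^ k + J * X₂ ^ k := by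
  obtain ⟨e, he, heJ⟩ := J.exists_linearIndependent_vecMul_eq_zero hr₀.symm
  let w : ℕ → Fin n → F := fun i => if h : i < r₀ then e ⟨i, h⟩ else 0
  obtain ⟨C, hC⟩ := exists_vecMul_eq_of_linearIndependent he fun i => w (i + 1)
  refine ⟨C, fun X₁ X₂ hCX => ?_⟩
  have hw : ∀ i, (X₁.vecMulLinear ^ k) (w i) = w (i + 1) := by
    intro i
    rw [vecMulLinear_pow_apply]
    by_cases hi : i < r₀
    · have hCi := hC ⟨i, hi⟩
      rw [hCX, vecMul_add, ← vecMul_vecMul, heJ, zero_vecMul, add_zero] at hCi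
      simpa only [w, dif_pos hi] using hCi
    · simp only [w, dif_neg hi, dif_neg (show ¬ i + 1 < r₀ by omega), zero_vecMul]
  have hlt := Module.End.mul_lt_finrank_of_pow_apply_eq_succ X₁.vecMulLinear k hw
    (r := r₀) (j := r₀ - 1) (dif_neg (lt_irrefl r₀))
    (by simpa only [w, dif_pos (show r₀ - 1 < r₀ by omega)] using he.ne_zero _)
  rw [finrank_fin_fun] at hlt
  omega

/-- If `r₀ = dim ker J ≥ 2` and `n ≤ k (r₀ - 1)`, then `(X₁,X₂) ↦ X₁^k + J X₂^k`
is not surjective on `M_n(F)`: some `C` is not in the image. -/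
theorem stmt_12 {F : Type*} [Field F] [IsAlgClosed F] [CharZero F] {n : ℕ}
    (J : Matrix (Fin n) (Fin n) F) (k : ℕ) (hk : 2 ≤ k)
    (r₀ : ℕ) (hr₀ : r₀ = Module.finrank F (LinearMap.ker J.mulVecLin))
    (hr₀2 : 2 ≤ r₀) (hn : n ≤ k * (r₀ - 1)) :
    ∃ C : Matrix (Fin n) (Fin n) F,
      ∀ X₁ X₂ : Matrix (Fin n) (Fin n) F, C ≠ X₁ ^ k + J * X₂ ^ k :=
  stmt_12_general J k r₀ hr₀ hr₀2 hn
end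

section
/- Let F be an algebraically closed field of characteristic 0 and k = 2. Let J = J_{0,2} ⊕ J_{0,1} ∈ M₃(F) (one nilpotent Jordan block of size 2 and one of size 1). Then for every C ∈ M₃(F) there exist X₁, X₂ ∈ M₃(F) with C = X₁² + J·X₂². -/
/-!
Since `J = E₀₁`, row `0` of `J X₂²` is row `1` of `X₂²` and the other rows vanish; row `1` of a
square can be any vector, so it suffices to find `X₁` whose square has prescribed rows `1` and `2`,
say `u` and `v`. If `u 0 ≠ 0` or `v 0 ≠ 0`, one row of `X₁` is free to solve a linear equation.
Otherwise the first column of the target vanishes, and `X₁` is built from a square root `β` of an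
eigenvalue of the lower right `2 × 2` block of the target, or, when `v 1 = 0` too, from a square
root of `v 2`.
-/

open Matrix Polynomial

section Ring

variable {n R : Type*} [Fintype n] [DecidableEq n] [Semiring R]

lemma sq_apply_eq_vecMul (X : Matrix n n R) (i : n) : (X ^ 2) i = X i ᵥ* X := by
  rw [sq, mul_apply_eq_vecMul]

lemma exists_sq_row_eq {i j : n} (hij : i ≠ j) (v : n → R) :
    ∃ X : Matrix n n R, (X ^ 2) i = v := by
  refine ⟨(updateRow 0 j v).updateRow i (Pi.single j 1), ?_⟩
  rw [sq_apply_eq_vecMul, updateRow_self, single_one_vecMul, row, updateRow_ne hij.symm,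
    updateRow_self]

end Ring

section Field

variable {F : Type*} [Field F]

lemma exists_sub_sq_mul_sub_sq_eq [IsAlgClosed F] (a b c d : F) :
    ∃ β : F, (a - β ^ 2) * (d - β ^ 2) = b * c := by
  have hdeg : ((C a - X ^ 2) * (C d - X ^ 2) - C (b * c) : F[X]).degree = 4 := by
    compute_degree!
  obtain ⟨β, hβ⟩ := IsAlgClosed.exists_root _ (by rw [hdeg]; decide)
  exact ⟨β, by simpa [sub_eq_zero] using hβ⟩

lemma exists_sq_rows_eq_of_left_zero_ne_zero (u v : Fin 3 → F) (hu : u 0 ≠ 0) :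
    ∃ X : Matrix (Fin 3) (Fin 3) F, (X ^ 2) 1 = u ∧ (X ^ 2) 2 = v := by
  refine ⟨of ![(u 0)⁻¹ • (v - u 1 • ![0, 0, 1] - u 2 • u), ![0, 0, 1], u], ?_, ?_⟩ <;>
    ext j <;> fin_cases j <;>
    simp [sq_apply_eq_vecMul, vecMul, dotProduct, Fin.sum_univ_three, vecHead, vecTail] <;>
    field_simp <;> ring

lemma exists_sq_rows_eq_of_right_zero_ne_zero (u v : Fin 3 → F) (hv : v 0 ≠ 0) :
    ∃ X : Matrix (Fin 3) (Fin 3) F, (X ^ 2) 1 = u ∧ (X ^ 2) 2 = v := by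
  refine ⟨of ![(v 0)⁻¹ • (u - v 1 • v - v 2 • ![0, 1, 0]), v, ![0, 1, 0]], ?_, ?_⟩ <;>
    ext j <;> fin_cases j <;>
    simp [sq_apply_eq_vecMul, vecMul, dotProduct, Fin.sum_univ_three, vecHead, vecTail] <;>
    field_simp <;> ring

lemma exists_sq_rows_eq_of_right_one_ne_zero [IsAlgClosed F] (u v : Fin 3 → F)
    (hu : u 0 = 0) (hv₀ : v 0 = 0) (hv₁ : v 1 ≠ 0) :
    ∃ X : Matrix (Fin 3) (Fin 3) F, (X ^ 2) 1 = u ∧ (X ^ 2) 2 = v := by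
  obtain ⟨β, hβ⟩ := exists_sub_sq_mul_sub_sq_eq (u 1) (u 2) (v 1) (v 2)
  set t := (u 1 - β ^ 2) / v 1
  refine ⟨of ![![0, v 1, v 2], ![t, β, -t * β], ![1, 0, 0]], ?_, ?_⟩ <;>
    ext j <;> fin_cases j <;>
    simp [sq_apply_eq_vecMul, vecMul, dotProduct, Fin.sum_univ_three, hu, hv₀, t] <;>
    field_simp <;> first | ring1 | linear_combination hβ

lemma exists_sq_rows_eq_of_right_zero_one_eq_zero [IsAlgClosed F] (u v : Fin 3 → F)
    (hv₀ : v 0 = 0) (hv₁ : v 1 = 0) :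
    ∃ X : Matrix (Fin 3) (Fin 3) F, (X ^ 2) 1 = u ∧ (X ^ 2) 2 = v := by
  obtain ⟨γ, hγ⟩ := IsAlgClosed.exists_pow_nat_eq (v 2) two_pos
  refine ⟨of ![u, ![1, 0, 0], ![0, 0, γ]], ?_, ?_⟩ <;>
    ext j <;> fin_cases j <;>
    simp [sq_apply_eq_vecMul, vecMul, dotProduct, Fin.sum_univ_three, hv₀, hv₁]
  linear_combination hγ

lemma exists_sq_rows_eq [IsAlgClosed F] (u v : Fin 3 → F) :
    ∃ X : Matrix (Fin 3) (Fin 3) F, (X ^ 2) 1 = u ∧ (X ^ 2) 2 = v := by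
  by_cases hu : u 0 = 0
  · by_cases hv₀ : v 0 = 0
    · by_cases hv₁ : v 1 = 0
      · exact exists_sq_rows_eq_of_right_zero_one_eq_zero u v hv₀ hv₁
      · exact exists_sq_rows_eq_of_right_one_ne_zero u v hu hv₀ hv₁
    · exact exists_sq_rows_eq_of_right_zero_ne_zero u v hv₀
  · exact exists_sq_rows_eq_of_left_zero_ne_zero u v hu

end Field

theorem stmt_19_general {F : Type*} [Field F] [IsAlgClosed F] (C : Matrix (Fin 3) (Fin 3) F) :
    ∃ X₁ X₂ : Matrix (Fin 3) (Fin 3) F,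
      C = X₁ ^ 2 + Matrix.single 0 1 (1 : F) * X₂ ^ 2 := by
  obtain ⟨X₁, h₁, h₂⟩ := exists_sq_rows_eq (C 1) (C 2)
  obtain ⟨X₂, h₀⟩ := exists_sq_row_eq (i := 1) (j := 0) (by decide) (C 0 - (X₁ ^ 2) 0)
  refine ⟨X₁, X₂, ?_⟩
  ext i j
  fin_cases i
  · simp [h₀]
  · simp [h₁]
  · simp [h₂]

/-- For `J = J_{0,2} ⊕ J_{0,1} ∈ M₃(F)` and `k = 2`, every `C ∈ M₃(F)` can be
written as `X₁² + J X₂²`. -/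
theorem stmt_19 {F : Type*} [Field F] [IsAlgClosed F] [CharZero F]
    (C : Matrix (Fin 3) (Fin 3) F) :
    ∃ X₁ X₂ : Matrix (Fin 3) (Fin 3) F,
      C = X₁ ^ 2 + Matrix.single 0 1 (1 : F) * X₂ ^ 2 :=
  stmt_19_general C
end
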